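/- arXiv:2104.07492 — 4 statements merged into one kernel-verified Lean document; each statement's English description precedes it below -/
import Mathlib

section
/- Let a, b ∈ ℝ satisfy a + b > 1, a < 1, and b < 1. Then there exists a constant C > 0 such that for all nonzero integers k, the sum over pairs of nonzero integers (k₁, k₂) with k₁ + k₂ = k of 1/(|k₁|^a · |k₂|^b) is at most C / |k|^{a+b-1}. -/
open Real Finset


private lemma bern_step {x p : ℝ} (hx : 1 ≤ x) (hp0 : 0 ≤ p) (hp1 : p ≤ 1) :
    p * x ^ (p - 1) ≤ x ^ p - (x - 1) ^ p := by
  have hx0 : (0:ℝ) < x := lt_of_lt_of_le one_pos hx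
  have h1 : x - 1 = x * (1 + (-1/x)) := by field_simp; ring
  have hs : (-1:ℝ) ≤ -1/x := by
    rw [neg_div]
    have : 1/x ≤ 1 := by rw [div_le_one hx0]; exact hx
    linarith
  have h2 : (x - 1) ^ p = x ^ p * (1 + (-1/x)) ^ p := by
    rw [h1, Real.mul_rpow hx0.le (by linarith)]
  have h3 : (1 + (-1/x)) ^ p ≤ 1 + p * (-1/x) :=
    rpow_one_add_le_one_add_mul_self hs hp0 hp1
  have h4 : (x - 1) ^ p ≤ x ^ p * (1 + p * (-1/x)) := by
    rw [h2]
    exact mul_le_mul_of_nonneg_left h3 (rpow_nonneg hx0.le p)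
  have h5 : x ^ (p - 1) = x ^ p / x := Real.rpow_sub_one hx0.ne' p
  rw [h5]
  have : x ^ p * (1 + p * (-1/x)) = x ^ p - p * (x ^ p / x) := by
    field_simp; ring
  rw [this] at h4
  linarith

private lemma tail_step {x s : ℝ} (hx : 1 ≤ x) (hs1 : 1 < s) (hs2 : s < 2) :
    x ^ (-s) ≤ 2/(s-1) * (x ^ (1-s) - (x+1) ^ (1-s)) := by
  have hx0 : (0:ℝ) < x := lt_of_lt_of_le one_pos hx
  have hx10 : (0:ℝ) < x + 1 := by linarith
  set q : ℝ := s - 1 with hq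
  have hq0 : 0 < q := by simp [hq]; linarith
  have hq1 : q ≤ 1 := by simp [hq]; linarith
  set X : ℝ := x ^ q with hX
  set Y : ℝ := (x+1) ^ q with hY
  have hXpos : 0 < X := rpow_pos_of_pos hx0 q
  have hYpos : 0 < Y := rpow_pos_of_pos hx10 q
  have key : q * (x+1) ^ (q - 1) ≤ Y - X := by
    have := bern_step (x := x + 1) (p := q) (by linarith) hq0.le hq1
    simpa using this
  have e4 : (x+1) ^ (q-1) = Y / (x+1) := Real.rpow_sub_one hx10.ne' q
  have key2 : q * Y ≤ (x+1) * (Y - X) := by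
    rw [e4, mul_div_assoc'] at key
    rw [div_le_iff₀ hx10] at key
    linarith [key]
  have e1 : x ^ (-s) = 1 / (x * X) := by
    rw [show -s = -(q + 1) by rw [hq]; ring, Real.rpow_neg hx0.le,
      Real.rpow_add hx0, Real.rpow_one, one_div, mul_comm]
  have e2 : x ^ (1-s) = X⁻¹ := by
    rw [show (1:ℝ)-s = -q by rw [hq]; ring, Real.rpow_neg hx0.le]
  have e3 : (x+1) ^ (1-s) = Y⁻¹ := by
    rw [show (1:ℝ)-s = -q by rw [hq]; ring, Real.rpow_neg hx10.le]
  rw [e1, e2, e3]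
  rw [div_le_iff₀ (by positivity)]
  have hXinv : X⁻¹ - Y⁻¹ = (Y - X) / (X * Y) := by field_simp
  rw [hXinv]
  rw [show 2/q * ((Y - X)/(X*Y)) * (x * X) = (2 * x * (Y - X)) / (q * Y) by
    field_simp]
  rw [le_div_iff₀ (by positivity)]
  have h2x : x + 1 ≤ 2 * x := by linarith
  have hYX : 0 < Y - X := by nlinarith
  nlinarith [key2, mul_le_mul_of_nonneg_right h2x hYX.le]

private lemma head_sum {c : ℝ} (hc0 : 0 < c) (hc1 : c < 1) (N : ℕ) :
    ∑ m ∈ Finset.Icc 1 N, ((m:ℝ)) ^ (-c) ≤ (N:ℝ) ^ (1 - c) / (1 - c) := by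
  induction N with
  | zero =>
    simp [Real.zero_rpow (by linarith : (1:ℝ) - c ≠ 0)]
  | succ n ih =>
    rw [Finset.sum_Icc_succ_top (Nat.le_add_left 1 n)]
    have hx : (1:ℝ) ≤ ((n:ℝ) + 1) := by
      have := Nat.cast_nonneg (α := ℝ) n; linarith
    have key := bern_step (x := (n:ℝ)+1) (p := 1 - c) hx (by linarith) (by linarith)
    rw [show (1:ℝ) - c - 1 = -c by ring, show ((n:ℝ)+1) - 1 = (n:ℝ) by ring] at key
    have hc : 0 < 1 - c := by linarith
    have hdiv : ((n:ℝ)+1)^(-c) ≤ (((n:ℝ)+1)^(1-c) - (n:ℝ)^(1-c))/(1-c) := by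
      rw [le_div_iff₀ hc]; nlinarith [key]
    have hsub : (((n:ℝ)+1)^(1-c) - (n:ℝ)^(1-c))/(1-c)
        = ((n:ℝ)+1)^(1-c)/(1-c) - (n:ℝ)^(1-c)/(1-c) := sub_div _ _ _
    push_cast
    linarith [ih]

private lemma tail_sum {s : ℝ} (hs1 : 1 < s) (hs2 : s < 2) (N : ℕ) (hN : 1 ≤ N) (j : ℕ) :
    ∑ m ∈ Finset.Ico N (N + j), ((m:ℝ)) ^ (-s)
      ≤ 2/(s-1) * ((N:ℝ) ^ (1-s) - ((N+j : ℕ):ℝ) ^ (1-s)) := by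
  induction j with
  | zero => simp
  | succ n ih =>
    rw [show N + (n+1) = (N + n) + 1 from rfl,
      Finset.sum_Ico_succ_top (Nat.le_add_right N n)]
    have hx : (1:ℝ) ≤ ((N+n : ℕ):ℝ) := by
      have : 1 ≤ N + n := le_trans hN (Nat.le_add_right N n)
      exact_mod_cast this
    have key := tail_step (x := ((N+n:ℕ):ℝ)) hx hs1 hs2
    push_cast at key ih ⊢
    linarith

private lemma head_sum' {c : ℝ} (hc0 : 0 < c) (hc1 : c < 1) (N : ℕ) (u : Finset ℕ)
    (hu : ∀ m ∈ u, 1 ≤ m ∧ m ≤ N) :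
    ∑ m ∈ u, ((m:ℝ)) ^ (-c) ≤ (N:ℝ) ^ (1-c) / (1-c) :=
  le_trans
    (Finset.sum_le_sum_of_subset_of_nonneg
      (fun m hm => Finset.mem_Icc.mpr (hu m hm))
      (fun i _ _ => rpow_nonneg (Nat.cast_nonneg i) _))
    (head_sum hc0 hc1 N)

private lemma tail_sum' {s : ℝ} (hs1 : 1 < s) (hs2 : s < 2) (N : ℕ) (hN : 1 ≤ N)
    (u : Finset ℕ) (hu : ∀ m ∈ u, N ≤ m) :
    ∑ m ∈ u, ((m:ℝ)) ^ (-s) ≤ 2/(s-1) * (N:ℝ) ^ (1-s) := by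
  have hsub : u ⊆ Finset.Ico N (N + (u.sup id + 1)) := by
    intro m hm
    rw [Finset.mem_Ico]
    refine ⟨hu m hm, ?_⟩
    have : m ≤ u.sup id := Finset.le_sup (f := id) hm
    omega
  calc ∑ m ∈ u, ((m:ℝ)) ^ (-s)
      ≤ ∑ m ∈ Finset.Ico N (N + (u.sup id + 1)), ((m:ℝ)) ^ (-s) :=
        Finset.sum_le_sum_of_subset_of_nonneg hsub
          (fun i _ _ => rpow_nonneg (Nat.cast_nonneg i) _)
    _ ≤ 2/(s-1) * ((N:ℝ) ^ (1-s) - ((N + (u.sup id + 1) : ℕ):ℝ) ^ (1-s)) :=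
        tail_sum hs1 hs2 N hN _
    _ ≤ 2/(s-1) * (N:ℝ) ^ (1-s) := by
        have h1 : (0:ℝ) ≤ ((N + (u.sup id + 1) : ℕ):ℝ) ^ (1-s) :=
          rpow_nonneg (Nat.cast_nonneg _) _
        have h2 : (0:ℝ) ≤ 2/(s-1) := div_nonneg (by norm_num) (by linarith)
        nlinarith

private lemma split_sum (t : Finset ℤ) (h0 : ∀ n ∈ t, n ≠ 0) (g : ℕ → ℝ)
    (hg : ∀ m, 0 ≤ g m) (u : Finset ℕ) (hu : ∀ n ∈ t, n.natAbs ∈ u) :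
    ∑ n ∈ t, g n.natAbs ≤ 2 * ∑ m ∈ u, g m := by
  have half : ∀ v : Finset ℤ, v ⊆ t → (∀ x ∈ v, ∀ y ∈ v, x.natAbs = y.natAbs → x = y) →
      ∑ n ∈ v, g n.natAbs ≤ ∑ m ∈ u, g m := by
    intro v hv hinj
    rw [← Finset.sum_image (f := g) (g := Int.natAbs) hinj]
    exact Finset.sum_le_sum_of_subset_of_nonneg
      (fun m hm => by
        obtain ⟨n, hn, rfl⟩ := Finset.mem_image.mp hm
        exact hu n (hv hn))
      (fun i _ _ => hg i)
  have e := Finset.sum_filter_add_sum_filter_not t (fun n => 0 < n) (fun n => g n.natAbs)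
  have h1 := half (t.filter (fun n => 0 < n)) (Finset.filter_subset _ _)
    (fun x hx y hy h => by
      simp only [Finset.mem_filter] at hx hy; omega)
  have h2 := half (t.filter (fun n => ¬ 0 < n)) (Finset.filter_subset _ _)
    (fun x hx y hy h => by
      simp only [Finset.mem_filter] at hx hy
      have hx0 := h0 x hx.1; have hy0 := h0 y hy.1
      omega)
  linarith

private lemma core {a b : ℝ} (hab : 1 < a + b) (ha0 : 0 < a) (ha : a < 1)
    (hb0 : 0 < b) (hb : b < 1) (k : ℤ) (hk : 1 ≤ k) (t : Finset ℤ)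
    (ht : ∀ n ∈ t, n ≠ 0 ∧ n ≠ k) :
    ∑ n ∈ t, |(n:ℝ)| ^ (-a) * |(k:ℝ) - (n:ℝ)| ^ (-b)
      ≤ (2^(b+1)/(1-a) + 2^(a+1)/(1-b) + 5*2^(a+b) + 2^(b+2)/(a+b-1))
        * (k:ℝ) ^ (1-(a+b)) := by
  have hab2 : a + b < 2 := by linarith
  have hk0 : (0:ℤ) ≤ k := by omega
  have hK0 : (0:ℝ) < (k:ℝ) := by exact_mod_cast hk
  have hK1 : (1:ℝ) ≤ (k:ℝ) := by exact_mod_cast hk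
  have hkt : ((k.toNat : ℕ) : ℝ) = (k:ℝ) := by exact_mod_cast Int.toNat_of_nonneg hk0
  have habs : ∀ n : ℤ, |(n:ℝ)| = ((n.natAbs : ℕ) : ℝ) := by
    intro n
    rw [← Int.cast_abs, Int.abs_eq_natAbs, Int.cast_natCast]
  have hyabs : ∀ n : ℤ, |(k:ℝ) - (n:ℝ)| = (((k-n).natAbs : ℕ) : ℝ) := by
    intro n
    rw [show (k:ℝ) - (n:ℝ) = ((k - n : ℤ):ℝ) by push_cast; ring, habs]
  have hKexp : ∀ c d : ℝ, (k:ℝ)^(-c) * (k:ℝ)^(-d) = (k:ℝ)^(-(c+d)) := by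
    intro c d; rw [← Real.rpow_add hK0]; ring_nf
  -- Region 1 : 2|n| ≤ k
  have R1 : ∀ v : Finset ℤ, v ⊆ t → (∀ n ∈ v, 2*(n.natAbs:ℤ) ≤ k) →
      ∑ n ∈ v, |(n:ℝ)|^(-a) * |(k:ℝ) - (n:ℝ)|^(-b)
        ≤ 2^(b+1)/(1-a) * (k:ℝ)^(1-(a+b)) := by
    intro v hv hP
    have step1 : ∑ n ∈ v, |(n:ℝ)|^(-a) * |(k:ℝ) - (n:ℝ)|^(-b)
        ≤ ∑ n ∈ v, (2^b * (k:ℝ)^(-b)) * |(n:ℝ)|^(-a) := by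
      refine Finset.sum_le_sum fun n hn => ?_
      have h2 : k ≤ 2 * ((k-n).natAbs : ℤ) := by
        have := hP n hn; omega
      have h1 : (k:ℝ) ≤ 2 * |(k:ℝ) - (n:ℝ)| := by
        have h2' := (Int.cast_le (R := ℝ)).mpr h2
        push_cast at h2'
        linarith
      have hyb : |(k:ℝ) - (n:ℝ)|^(-b) ≤ 2^b * (k:ℝ)^(-b) := by
        have hle : (k:ℝ)/2 ≤ |(k:ℝ) - (n:ℝ)| := by linarith
        have := rpow_le_rpow_of_nonpos (by positivity) hle (by linarith : -b ≤ 0)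
        calc |(k:ℝ) - (n:ℝ)|^(-b) ≤ ((k:ℝ)/2)^(-b) := this
          _ = 2^b * (k:ℝ)^(-b) := by
            rw [Real.div_rpow hK0.le (by norm_num : (0:ℝ) ≤ 2),
              Real.rpow_neg (by norm_num : (0:ℝ) ≤ 2), div_inv_eq_mul, mul_comm]
      calc |(n:ℝ)|^(-a) * |(k:ℝ) - (n:ℝ)|^(-b)
          ≤ |(n:ℝ)|^(-a) * (2^b * (k:ℝ)^(-b)) :=
            mul_le_mul_of_nonneg_left hyb (rpow_nonneg (abs_nonneg _) _)
        _ = (2^b * (k:ℝ)^(-b)) * |(n:ℝ)|^(-a) := mul_comm _ _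
    have step2 : ∑ n ∈ v, |(n:ℝ)|^(-a) ≤ 2 * ((k:ℝ)^(1-a)/(1-a)) := by
      have e : ∑ n ∈ v, |(n:ℝ)|^(-a) = ∑ n ∈ v, (fun m : ℕ => (m:ℝ)^(-a)) n.natAbs :=
        Finset.sum_congr rfl fun n _ => by rw [habs n]
      rw [e]
      calc ∑ n ∈ v, (fun m : ℕ => (m:ℝ)^(-a)) n.natAbs
          ≤ 2 * ∑ m ∈ Finset.Icc 1 k.toNat, ((m:ℕ):ℝ)^(-a) := by
            refine split_sum v (fun n hn => (ht n (hv hn)).1)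
              (fun m : ℕ => (m:ℝ)^(-a))
              (fun m => rpow_nonneg (Nat.cast_nonneg m) _)
              (Finset.Icc 1 k.toNat) (fun n hn => ?_)
            have h0 : n ≠ 0 := (ht n (hv hn)).1
            have := hP n hn
            rw [Finset.mem_Icc]
            omega
        _ ≤ 2 * ((k:ℝ)^(1-a)/(1-a)) := by
            have := head_sum ha0 ha k.toNat
            rw [hkt] at this
            linarith
    calc ∑ n ∈ v, |(n:ℝ)|^(-a) * |(k:ℝ) - (n:ℝ)|^(-b)
        ≤ ∑ n ∈ v, (2^b * (k:ℝ)^(-b)) * |(n:ℝ)|^(-a) := step1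
      _ = (2^b * (k:ℝ)^(-b)) * ∑ n ∈ v, |(n:ℝ)|^(-a) := by rw [← Finset.mul_sum]
      _ ≤ (2^b * (k:ℝ)^(-b)) * (2 * ((k:ℝ)^(1-a)/(1-a))) := by
          refine mul_le_mul_of_nonneg_left step2 ?_
          positivity
      _ = 2^(b+1)/(1-a) * (k:ℝ)^(1-(a+b)) := by
          rw [Real.rpow_add_one (by norm_num : (2:ℝ) ≠ 0) b,
            show (1:ℝ)-(a+b) = -b + (1-a) by ring, Real.rpow_add hK0]
          field_simp
  -- Region 2 : 2|k-n| ≤ k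
  have R2 : ∀ v : Finset ℤ, v ⊆ t → (∀ n ∈ v, 2*((k-n).natAbs:ℤ) ≤ k) →
      ∑ n ∈ v, |(n:ℝ)|^(-a) * |(k:ℝ) - (n:ℝ)|^(-b)
        ≤ 2^(a+1)/(1-b) * (k:ℝ)^(1-(a+b)) := by
    intro v hv hP
    have step1 : ∑ n ∈ v, |(n:ℝ)|^(-a) * |(k:ℝ) - (n:ℝ)|^(-b)
        ≤ ∑ n ∈ v, (2^a * (k:ℝ)^(-a)) * |(k:ℝ) - (n:ℝ)|^(-b) := by
      refine Finset.sum_le_sum fun n hn => ?_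
      have h2 : k ≤ 2 * (n.natAbs : ℤ) := by
        have := hP n hn; omega
      have h2' := (Int.cast_le (R := ℝ)).mpr h2
      push_cast at h2'
      have hxa : |(n:ℝ)|^(-a) ≤ 2^a * (k:ℝ)^(-a) := by
        have hle : (k:ℝ)/2 ≤ |(n:ℝ)| := by linarith
        have h3 := rpow_le_rpow_of_nonpos (by positivity) hle (by linarith : -a ≤ 0)
        calc |(n:ℝ)|^(-a) ≤ ((k:ℝ)/2)^(-a) := h3
          _ = 2^a * (k:ℝ)^(-a) := by
            rw [Real.div_rpow hK0.le (by norm_num : (0:ℝ) ≤ 2),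
              Real.rpow_neg (by norm_num : (0:ℝ) ≤ 2), div_inv_eq_mul, mul_comm]
      exact mul_le_mul_of_nonneg_right hxa (rpow_nonneg (abs_nonneg _) _)
    have step2 : ∑ n ∈ v, |(k:ℝ) - (n:ℝ)|^(-b) ≤ 2 * ((k:ℝ)^(1-b)/(1-b)) := by
      have e : ∑ n ∈ v, |(k:ℝ) - (n:ℝ)|^(-b)
          = ∑ m ∈ v.image (fun n => k - n), (fun m : ℕ => (m:ℝ)^(-b)) m.natAbs := by
        rw [Finset.sum_image (fun x _ y _ h => by omega)]
        exact Finset.sum_congr rfl fun n _ => by rw [hyabs n]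
      rw [e]
      calc ∑ m ∈ v.image (fun n => k - n), (fun m : ℕ => (m:ℝ)^(-b)) m.natAbs
          ≤ 2 * ∑ m ∈ Finset.Icc 1 k.toNat, ((m:ℕ):ℝ)^(-b) := by
            refine split_sum _ (fun m hm => ?_) (fun m : ℕ => (m:ℝ)^(-b))
              (fun m => rpow_nonneg (Nat.cast_nonneg m) _)
              (Finset.Icc 1 k.toNat) (fun m hm => ?_)
            · obtain ⟨n, hn, rfl⟩ := Finset.mem_image.mp hm
              have := (ht n (hv hn)).2
              omega
            · obtain ⟨n, hn, rfl⟩ := Finset.mem_image.mp hm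
              have h1 := hP n hn
              have h0 := (ht n (hv hn)).2
              rw [Finset.mem_Icc]
              omega
        _ ≤ 2 * ((k:ℝ)^(1-b)/(1-b)) := by
            have := head_sum hb0 hb k.toNat
            rw [hkt] at this
            linarith
    calc ∑ n ∈ v, |(n:ℝ)|^(-a) * |(k:ℝ) - (n:ℝ)|^(-b)
        ≤ ∑ n ∈ v, (2^a * (k:ℝ)^(-a)) * |(k:ℝ) - (n:ℝ)|^(-b) := step1
      _ = (2^a * (k:ℝ)^(-a)) * ∑ n ∈ v, |(k:ℝ) - (n:ℝ)|^(-b) := by rw [← Finset.mul_sum]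
      _ ≤ (2^a * (k:ℝ)^(-a)) * (2 * ((k:ℝ)^(1-b)/(1-b))) := by
          refine mul_le_mul_of_nonneg_left step2 ?_
          positivity
      _ = 2^(a+1)/(1-b) * (k:ℝ)^(1-(a+b)) := by
          rw [Real.rpow_add_one (by norm_num : (2:ℝ) ≠ 0) a,
            show (1:ℝ)-(a+b) = -a + (1-b) by ring, Real.rpow_add hK0]
          field_simp
  -- Region 3a : both big, |n| ≤ 2k
  have R3a : ∀ v : Finset ℤ, v ⊆ t →
      (∀ n ∈ v, k < 2*(n.natAbs:ℤ)) → (∀ n ∈ v, k < 2*((k-n).natAbs:ℤ)) →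
      (∀ n ∈ v, (n.natAbs:ℤ) ≤ 2*k) →
      ∑ n ∈ v, |(n:ℝ)|^(-a) * |(k:ℝ) - (n:ℝ)|^(-b)
        ≤ 5*2^(a+b) * (k:ℝ)^(1-(a+b)) := by
    intro v hv hPx hPy hPb
    have hterm : ∀ n ∈ v, |(n:ℝ)|^(-a) * |(k:ℝ) - (n:ℝ)|^(-b)
        ≤ 2^(a+b) * (k:ℝ)^(-(a+b)) := by
      intro n hn
      have hx' := (Int.cast_le (R := ℝ)).mpr (le_of_lt (hPx n hn))
      push_cast at hx'
      have hy' := (Int.cast_le (R := ℝ)).mpr (le_of_lt (hPy n hn))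
      push_cast at hy'
      have hxa : |(n:ℝ)|^(-a) ≤ 2^a * (k:ℝ)^(-a) := by
        have hle : (k:ℝ)/2 ≤ |(n:ℝ)| := by linarith
        calc |(n:ℝ)|^(-a) ≤ ((k:ℝ)/2)^(-a) :=
            rpow_le_rpow_of_nonpos (by positivity) hle (by linarith)
          _ = 2^a * (k:ℝ)^(-a) := by
            rw [Real.div_rpow hK0.le (by norm_num : (0:ℝ) ≤ 2),
              Real.rpow_neg (by norm_num : (0:ℝ) ≤ 2), div_inv_eq_mul, mul_comm]
      have hyb : |(k:ℝ) - (n:ℝ)|^(-b) ≤ 2^b * (k:ℝ)^(-b) := by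
        have hle : (k:ℝ)/2 ≤ |(k:ℝ) - (n:ℝ)| := by linarith
        calc |(k:ℝ) - (n:ℝ)|^(-b) ≤ ((k:ℝ)/2)^(-b) :=
            rpow_le_rpow_of_nonpos (by positivity) hle (by linarith)
          _ = 2^b * (k:ℝ)^(-b) := by
            rw [Real.div_rpow hK0.le (by norm_num : (0:ℝ) ≤ 2),
              Real.rpow_neg (by norm_num : (0:ℝ) ≤ 2), div_inv_eq_mul, mul_comm]
      calc |(n:ℝ)|^(-a) * |(k:ℝ) - (n:ℝ)|^(-b)
          ≤ (2^a * (k:ℝ)^(-a)) * (2^b * (k:ℝ)^(-b)) := by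
            apply mul_le_mul hxa hyb (rpow_nonneg (abs_nonneg _) _)
            positivity
        _ = 2^(a+b) * (k:ℝ)^(-(a+b)) := by
            rw [Real.rpow_add (by norm_num : (0:ℝ) < 2), ← hKexp a b]; ring
    have hcard : ((v.card : ℕ) : ℝ) ≤ 5 * (k:ℝ) := by
      have hsub : v ⊆ Finset.Icc (-(2*k)) (2*k) := by
        intro n hn
        rw [Finset.mem_Icc]
        have := hPb n hn
        omega
      have h1 : v.card ≤ (Finset.Icc (-(2*k)) (2*k)).card := Finset.card_le_card hsub
      rw [Int.card_Icc] at h1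
      have h2 : ((2*k + 1 - -(2*k)).toNat : ℤ) = 4*k+1 := by omega
      have h3 : (v.card : ℤ) ≤ 4*k+1 := by omega
      have h4 := (Int.cast_le (R := ℝ)).mpr h3
      push_cast at h4
      linarith
    calc ∑ n ∈ v, |(n:ℝ)|^(-a) * |(k:ℝ) - (n:ℝ)|^(-b)
        ≤ v.card • (2^(a+b) * (k:ℝ)^(-(a+b))) :=
          Finset.sum_le_card_nsmul v _ _ hterm
      _ = (v.card : ℝ) * (2^(a+b) * (k:ℝ)^(-(a+b))) := by rw [nsmul_eq_mul]
      _ ≤ (5*(k:ℝ)) * (2^(a+b) * (k:ℝ)^(-(a+b))) := by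
          refine mul_le_mul_of_nonneg_right hcard ?_
          positivity
      _ = 5*2^(a+b) * (k:ℝ)^(1-(a+b)) := by
          rw [show (1:ℝ)-(a+b) = 1 + -(a+b) by ring, Real.rpow_add hK0, Real.rpow_one]
          ring
  -- Region 3b : |n| > 2k
  have R3b : ∀ v : Finset ℤ, v ⊆ t → (∀ n ∈ v, 2*k < (n.natAbs:ℤ)) →
      ∑ n ∈ v, |(n:ℝ)|^(-a) * |(k:ℝ) - (n:ℝ)|^(-b)
        ≤ 2^(b+2)/(a+b-1) * (k:ℝ)^(1-(a+b)) := by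
    intro v hv hP
    have step1 : ∑ n ∈ v, |(n:ℝ)|^(-a) * |(k:ℝ) - (n:ℝ)|^(-b)
        ≤ ∑ n ∈ v, 2^b * (fun m : ℕ => (m:ℝ)^(-(a+b))) n.natAbs := by
      refine Finset.sum_le_sum fun n hn => ?_
      have hn0 : n ≠ 0 := (ht n (hv hn)).1
      have hx0 : (0:ℝ) < |(n:ℝ)| := by
        have : (n:ℝ) ≠ 0 := Int.cast_ne_zero.mpr hn0
        positivity
      have h2 : (n.natAbs : ℤ) ≤ 2 * ((k-n).natAbs : ℤ) := by
        have := hP n hn; omega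
      have h2' := (Int.cast_le (R := ℝ)).mpr h2
      push_cast at h2'
      have hyb : |(k:ℝ) - (n:ℝ)|^(-b) ≤ 2^b * |(n:ℝ)|^(-b) := by
        have hle : |(n:ℝ)|/2 ≤ |(k:ℝ) - (n:ℝ)| := by linarith
        calc |(k:ℝ) - (n:ℝ)|^(-b) ≤ (|(n:ℝ)|/2)^(-b) :=
            rpow_le_rpow_of_nonpos (by positivity) hle (by linarith)
          _ = 2^b * |(n:ℝ)|^(-b) := by
            rw [Real.div_rpow hx0.le (by norm_num : (0:ℝ) ≤ 2),
              Real.rpow_neg (by norm_num : (0:ℝ) ≤ 2), div_inv_eq_mul, mul_comm]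
      calc |(n:ℝ)|^(-a) * |(k:ℝ) - (n:ℝ)|^(-b)
          ≤ |(n:ℝ)|^(-a) * (2^b * |(n:ℝ)|^(-b)) :=
            mul_le_mul_of_nonneg_left hyb (rpow_nonneg (abs_nonneg _) _)
        _ = 2^b * (|(n:ℝ)|^(-a) * |(n:ℝ)|^(-b)) := by ring
        _ = 2^b * (fun m : ℕ => (m:ℝ)^(-(a+b))) n.natAbs := by
            rw [← Real.rpow_add hx0, show -a + -b = -(a+b) by ring, habs n]
    have step2 : ∑ n ∈ v, (fun m : ℕ => (m:ℝ)^(-(a+b))) n.natAbs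
        ≤ 2 * (2/(a+b-1) * (((2*k).toNat : ℕ) : ℝ)^(1-(a+b))) := by
      calc ∑ n ∈ v, (fun m : ℕ => (m:ℝ)^(-(a+b))) n.natAbs
          ≤ 2 * ∑ m ∈ v.image Int.natAbs, ((m:ℕ):ℝ)^(-(a+b)) :=
            split_sum v (fun n hn => (ht n (hv hn)).1) _
              (fun m => rpow_nonneg (Nat.cast_nonneg m) _)
              (v.image Int.natAbs) (fun n hn => Finset.mem_image_of_mem _ hn)
        _ ≤ 2 * (2/(a+b-1) * (((2*k).toNat : ℕ) : ℝ)^(1-(a+b))) := by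
            have htail : ∀ m ∈ v.image Int.natAbs, (2*k).toNat ≤ m := by
              intro m hm
              obtain ⟨n, hn, rfl⟩ := Finset.mem_image.mp hm
              have := hP n hn
              omega
            have := tail_sum' hab hab2 (2*k).toNat (by omega) (v.image Int.natAbs) htail
            linarith
    have hN : (((2*k).toNat : ℕ) : ℝ) = 2*(k:ℝ) := by
      have : (((2*k).toNat : ℕ) : ℤ) = 2*k := Int.toNat_of_nonneg (by omega)
      exact_mod_cast this
    have hNexp : (((2*k).toNat : ℕ) : ℝ)^(1-(a+b)) ≤ (k:ℝ)^(1-(a+b)) := by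
      rw [hN]
      exact rpow_le_rpow_of_nonpos hK0 (by linarith) (by linarith)
    calc ∑ n ∈ v, |(n:ℝ)|^(-a) * |(k:ℝ) - (n:ℝ)|^(-b)
        ≤ ∑ n ∈ v, 2^b * (fun m : ℕ => (m:ℝ)^(-(a+b))) n.natAbs := step1
      _ = 2^b * ∑ n ∈ v, (fun m : ℕ => (m:ℝ)^(-(a+b))) n.natAbs := by
          rw [← Finset.mul_sum]
      _ ≤ 2^b * (2 * (2/(a+b-1) * (((2*k).toNat : ℕ) : ℝ)^(1-(a+b)))) := by
          refine mul_le_mul_of_nonneg_left step2 ?_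
          positivity
      _ ≤ 2^b * (2 * (2/(a+b-1) * (k:ℝ)^(1-(a+b)))) := by
          have hq : (0:ℝ) < a+b-1 := by linarith
          gcongr
      _ = 2^(b+2)/(a+b-1) * (k:ℝ)^(1-(a+b)) := by
          rw [show (b:ℝ)+2 = (b+1)+1 by ring,
            Real.rpow_add_one (by norm_num : (2:ℝ) ≠ 0),
            Real.rpow_add_one (by norm_num : (2:ℝ) ≠ 0)]
          field_simp
  -- Assembly
  classical
  set f : ℤ → ℝ := fun n => |(n:ℝ)|^(-a) * |(k:ℝ) - (n:ℝ)|^(-b) with hf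
  have e1 := Finset.sum_filter_add_sum_filter_not t (fun n => 2*(n.natAbs:ℤ) ≤ k) f
  set t1 := t.filter (fun n => 2*(n.natAbs:ℤ) ≤ k) with ht1
  set t' := t.filter (fun n => ¬ 2*(n.natAbs:ℤ) ≤ k) with ht'
  have e2 := Finset.sum_filter_add_sum_filter_not t' (fun n => 2*((k-n).natAbs:ℤ) ≤ k) f
  set t2 := t'.filter (fun n => 2*((k-n).natAbs:ℤ) ≤ k) with ht2
  set t3 := t'.filter (fun n => ¬ 2*((k-n).natAbs:ℤ) ≤ k) with ht3
  have e3 := Finset.sum_filter_add_sum_filter_not t3 (fun n => (n.natAbs:ℤ) ≤ 2*k) f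
  set t3a := t3.filter (fun n => (n.natAbs:ℤ) ≤ 2*k) with ht3a
  set t3b := t3.filter (fun n => ¬ (n.natAbs:ℤ) ≤ 2*k) with ht3b
  have hsub' : t' ⊆ t := Finset.filter_subset _ _
  have hsub3 : t3 ⊆ t := le_trans (Finset.filter_subset _ _) hsub'
  have B1 := R1 t1 (Finset.filter_subset _ _) (fun n hn => (Finset.mem_filter.mp hn).2)
  have B2 := R2 t2 (le_trans (Finset.filter_subset _ _) hsub')
    (fun n hn => (Finset.mem_filter.mp hn).2)
  have hmem3a : ∀ n ∈ t3a, ¬ 2*(n.natAbs:ℤ) ≤ k ∧ ¬ 2*((k-n).natAbs:ℤ) ≤ k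
      ∧ (n.natAbs:ℤ) ≤ 2*k := by
    intro n hn
    rw [ht3a, ht3, ht', Finset.mem_filter, Finset.mem_filter, Finset.mem_filter] at hn
    exact ⟨hn.1.1.2, hn.1.2, hn.2⟩
  have hmem3b : ∀ n ∈ t3b, ¬ (n.natAbs:ℤ) ≤ 2*k := by
    intro n hn
    rw [ht3b, Finset.mem_filter] at hn
    exact hn.2
  have B3a := R3a t3a (le_trans (Finset.filter_subset _ _) hsub3)
    (fun n hn => by have := (hmem3a n hn).1; omega)
    (fun n hn => by have := (hmem3a n hn).2.1; omega)
    (fun n hn => (hmem3a n hn).2.2)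
  have B3b := R3b t3b (le_trans (Finset.filter_subset _ _) hsub3)
    (fun n hn => by have := hmem3b n hn; omega)
  linarith [B1, B2, B3a, B3b, e1, e2, e3]

/-- Convolution-type sum estimate (Lemma 4.1 of Mourrat–Weber style):
for `a + b > 1`, `a < 1`, `b < 1`, the sum over nonzero integers `k₁ + k₂ = k`
of `1/(|k₁|^a |k₂|^b)` is bounded by `C/|k|^(a+b-1)`. -/
theorem stmt_1 (a b : ℝ) (hab : 1 < a + b) (ha : a < 1) (hb : b < 1) :
    ∃ C : ℝ, 0 < C ∧ ∀ k : ℤ, k ≠ 0 →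
      (∑' p : {p : ℤ × ℤ // p.1 ≠ 0 ∧ p.2 ≠ 0 ∧ p.1 + p.2 = k},
        1 / (|((p : ℤ × ℤ).1 : ℝ)| ^ a * |((p : ℤ × ℤ).2 : ℝ)| ^ b))
      ≤ C / |(k : ℝ)| ^ (a + b - 1) := by
  have ha0 : 0 < a := by linarith
  have hb0 : 0 < b := by linarith
  set C : ℝ := 2^(b+1)/(1-a) + 2^(a+1)/(1-b) + 5*2^(a+b) + 2^(b+2)/(a+b-1) with hC
  have hCpos : 0 < C := by
    have h1 : (0:ℝ) < 2^(b+1)/(1-a) :=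
      div_pos (rpow_pos_of_pos (by norm_num) _) (by linarith)
    have h2 : (0:ℝ) < 2^(a+1)/(1-b) :=
      div_pos (rpow_pos_of_pos (by norm_num) _) (by linarith)
    have h3 : (0:ℝ) < 5*2^(a+b) := by
      have := rpow_pos_of_pos (show (0:ℝ) < 2 by norm_num) (a+b); linarith
    have h4 : (0:ℝ) < 2^(b+2)/(a+b-1) :=
      div_pos (rpow_pos_of_pos (by norm_num) _) (by linarith)
    rw [hC]; linarith
  refine ⟨C, hCpos, ?_⟩
  intro k hk
  have hKpos : (0:ℝ) < |(k:ℝ)| := by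
    have : (k:ℝ) ≠ 0 := Int.cast_ne_zero.mpr hk
    positivity
  have hRHS : C / |(k:ℝ)|^(a+b-1) = C * |(k:ℝ)|^(1-(a+b)) := by
    rw [show (1:ℝ)-(a+b) = -(a+b-1) by ring, Real.rpow_neg (abs_nonneg _),
      div_eq_mul_inv]
  rw [hRHS]
  refine tsum_le_of_sum_le' (mul_nonneg hCpos.le (rpow_nonneg (abs_nonneg _) _)) ?_
  intro u
  have termEq : ∀ p q : ℤ, p ≠ 0 → q ≠ 0 → p + q = k →
      1 / (|(p:ℝ)| ^ a * |(q:ℝ)| ^ b) = |(p:ℝ)|^(-a) * |(k:ℝ) - (p:ℝ)|^(-b) := by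
    intro p q hp hq hpq
    have hq' : (k:ℝ) - (p:ℝ) = (q:ℝ) := by
      have : q = k - p := by omega
      rw [this]; push_cast; ring
    rw [hq', Real.rpow_neg (abs_nonneg _), Real.rpow_neg (abs_nonneg _), one_div,
      mul_inv]
  rcases hk.lt_or_gt with hneg | hpos
  · -- k < 0, use -k
    have hk' : 1 ≤ -k := by omega
    set t : Finset ℤ := u.image (fun x => -x.1.1) with htdef
    have hinj : ∀ x ∈ u, ∀ y ∈ u, -x.1.1 = -y.1.1 → x = y := by
      intro x hx y hy h
      obtain ⟨hx1, hx2, hx3⟩ := x.2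
      obtain ⟨hy1, hy2, hy3⟩ := y.2
      apply Subtype.ext; apply Prod.ext <;> omega
    have hsum : ∑ n ∈ t, |(n:ℝ)|^(-a) * |((-k : ℤ):ℝ) - (n:ℝ)|^(-b)
        = ∑ x ∈ u, 1 / (|(x.1.1:ℝ)| ^ a * |(x.1.2:ℝ)| ^ b) := by
      rw [htdef, Finset.sum_image hinj]
      refine Finset.sum_congr rfl fun x _ => ?_
      obtain ⟨hx1, hx2, hx3⟩ := x.2
      rw [termEq x.1.1 x.1.2 hx1 hx2 hx3]
      have e1 : |((-x.1.1 : ℤ):ℝ)| = |(x.1.1:ℝ)| := by push_cast; rw [abs_neg]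
      have e2 : |((-k : ℤ):ℝ) - ((-x.1.1 : ℤ):ℝ)| = |(k:ℝ) - (x.1.1:ℝ)| := by
        push_cast
        rw [show -(k:ℝ) - -(x.1.1:ℝ) = -((k:ℝ) - (x.1.1:ℝ)) by ring, abs_neg]
      rw [e1, e2]
    have ht : ∀ n ∈ t, n ≠ 0 ∧ n ≠ -k := by
      intro n hn
      rw [htdef] at hn
      obtain ⟨x, hx, rfl⟩ := Finset.mem_image.mp hn
      obtain ⟨hx1, hx2, hx3⟩ := x.2
      constructor <;> omega
    have hcore := core hab ha0 ha hb0 hb (-k) hk' t ht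
    have habsk : ((-k : ℤ):ℝ) = |(k:ℝ)| := by
      rw [← Int.cast_abs, abs_of_neg hneg]
    rw [← hsum, ← habsk, hC]
    exact hcore
  · -- 0 < k
    have hk' : 1 ≤ k := hpos
    set t : Finset ℤ := u.image (fun x => x.1.1) with htdef
    have hinj : ∀ x ∈ u, ∀ y ∈ u, x.1.1 = y.1.1 → x = y := by
      intro x hx y hy h
      obtain ⟨hx1, hx2, hx3⟩ := x.2
      obtain ⟨hy1, hy2, hy3⟩ := y.2
      apply Subtype.ext; apply Prod.ext <;> omega
    have hsum : ∑ n ∈ t, |(n:ℝ)|^(-a) * |(k:ℝ) - (n:ℝ)|^(-b)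
        = ∑ x ∈ u, 1 / (|(x.1.1:ℝ)| ^ a * |(x.1.2:ℝ)| ^ b) := by
      rw [htdef, Finset.sum_image hinj]
      refine Finset.sum_congr rfl fun x _ => ?_
      obtain ⟨hx1, hx2, hx3⟩ := x.2
      rw [termEq x.1.1 x.1.2 hx1 hx2 hx3]
    have ht : ∀ n ∈ t, n ≠ 0 ∧ n ≠ k := by
      intro n hn
      rw [htdef] at hn
      obtain ⟨x, hx, rfl⟩ := Finset.mem_image.mp hn
      obtain ⟨hx1, hx2, hx3⟩ := x.2
      constructor <;> omega
    have hcore := core hab ha0 ha hb0 hb k hk' t ht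
    have habsk : |(k:ℝ)| = (k:ℝ) := by
      rw [← Int.cast_abs, abs_of_pos hpos]
    rw [← hsum, habsk, hC]
    exact hcore
end

section
/- Let a, b ∈ ℝ satisfy a + b > 1. Then there exists a constant C > 0 such that for all nonzero integers k, the sum over pairs of nonzero integers (k₁, k₂) with k₁ + k₂ = k and |k₁|/2 ≤ |k₂| ≤ 2|k₁| of 1/(|k₁|^a · |k₂|^b) is at most C / |k|^{a+b-1}. -/
open Real Filter Topology

private lemma key_pointwise {s : ℝ} (hs : 1 < s) {x : ℝ} (hx : 1 ≤ x) :
    x ^ (-s) ≤ 2 ^ s / (s - 1) * (x ^ (1 - s) - (x + 1) ^ (1 - s)) := by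
  have hx0 : (0:ℝ) < x := lt_of_lt_of_le one_pos hx
  have hlt : x < x + 1 := by linarith
  -- MVT
  obtain ⟨c, hc, hceq⟩ := exists_hasDerivAt_eq_slope (fun y : ℝ => y ^ (1 - s))
    (fun y : ℝ => (1 - s) * y ^ (1 - s - 1)) hlt
    (ContinuousOn.rpow_const continuousOn_id (fun y hy => Or.inl (by
      have h := hy.1
      intro h0; rw [h0] at h; linarith)))
    (fun y hy => Real.hasDerivAt_rpow_const (Or.inl (by
      have h := hy.1
      intro h0; rw [h0] at h; linarith)))
  have hc0 : 0 < c := lt_trans hx0 hc.1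
  have hcx1 : c ≤ x + 1 := le_of_lt hc.2
  have hslope : x ^ (1 - s) - (x + 1) ^ (1 - s) = (s - 1) * c ^ (-s) := by
    have h1 : (x + 1) - x = 1 := by ring
    rw [h1, div_one] at hceq
    have h2 : (1 : ℝ) - s - 1 = -s := by ring
    rw [h2] at hceq
    nlinarith [hceq]
  have h1 : (x + 1) ^ (-s) ≤ c ^ (-s) :=
    Real.rpow_le_rpow_of_nonpos hc0 hcx1 (by linarith)
  have h2 : (2 * x) ^ (-s) ≤ (x + 1) ^ (-s) :=
    Real.rpow_le_rpow_of_nonpos (by linarith) (by linarith) (by linarith)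
  have h3 : (2 * x) ^ (-s) = 2 ^ (-s) * x ^ (-s) :=
    Real.mul_rpow (by norm_num) (le_of_lt hx0)
  have h4 : (0:ℝ) < 2 ^ s := Real.rpow_pos_of_pos (by norm_num) _
  have h5 : (2:ℝ) ^ (-s) = (2 ^ s)⁻¹ := by
    rw [Real.rpow_neg (by norm_num)]
  -- combine
  have h6 : x ^ (-s) ≤ 2 ^ s * c ^ (-s) := by
    have := le_trans h2 h1
    rw [h3, h5] at this
    calc x ^ (-s) = 2 ^ s * ((2 ^ s)⁻¹ * x ^ (-s)) := by field_simp
    _ ≤ 2 ^ s * c ^ (-s) := by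
        apply mul_le_mul_of_nonneg_left this (le_of_lt h4)
  calc x ^ (-s) ≤ 2 ^ s * c ^ (-s) := h6
  _ = 2 ^ s / (s - 1) * ((s - 1) * c ^ (-s)) := by
      have hs1 : s - 1 ≠ 0 := by linarith
      field_simp
  _ = 2 ^ s / (s - 1) * (x ^ (1 - s) - (x + 1) ^ (1 - s)) := by rw [hslope]

private lemma nat_tail {s : ℝ} (hs : 1 < s) (m : ℕ) (hm : 1 ≤ m) :
    Summable (fun n : ℕ => if m ≤ n then (n:ℝ) ^ (-s) else 0) ∧
    ∑' n : ℕ, (if m ≤ n then (n:ℝ) ^ (-s) else 0) ≤ 2 ^ s / (s - 1) * (m:ℝ) ^ (1-s) := by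
  set c : ℝ := 2 ^ s / (s - 1) with hc
  have hcpos : 0 < c := div_pos (Real.rpow_pos_of_pos two_pos s) (by linarith)
  set F : ℕ → ℝ := fun n => if m ≤ n then (n:ℝ) ^ (-s) else 0 with hF
  set G : ℕ → ℝ := fun n => if m ≤ n then c * ((n:ℝ) ^ (1-s) - ((n:ℝ)+1) ^ (1-s)) else 0
    with hGdef
  have hFnn : ∀ n, 0 ≤ F n := by
    intro n; simp only [hF]; split
    · positivity
    · exact le_refl _
  have hFG : ∀ n, F n ≤ G n := by
    intro n; simp only [hF, hGdef]; split
    · rename_i h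
      have hx : (1:ℝ) ≤ (n:ℝ) := by exact_mod_cast le_trans hm h
      exact key_pointwise hs hx
    · exact le_refl _
  have hmr : (1:ℝ) ≤ (m:ℝ) := by exact_mod_cast hm
  set ψ : ℕ → ℝ := fun j => c * (((j:ℝ) + m) ^ (1 - s)) with hψ
  have hdiffnn : ∀ j, 0 ≤ ψ j - ψ (j+1) := by
    intro j
    have h1 : (((j:ℝ)+1) + m) ^ (1-s) ≤ ((j:ℝ) + m) ^ (1-s) := by
      apply Real.rpow_le_rpow_of_nonpos (by positivity) (by linarith)
        (by linarith)
    simp only [hψ]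
    push_cast
    nlinarith [h1, hcpos]
  have htend : Tendsto ψ atTop (𝓝 0) := by
    have h1 : Tendsto (fun j : ℕ => ((j:ℝ) + m)) atTop atTop :=
      tendsto_atTop_add_const_right _ _ tendsto_natCast_atTop_atTop
    have h2 := (tendsto_rpow_neg_atTop (by linarith : (0:ℝ) < s - 1)).comp h1
    have h3 : Tendsto (fun j : ℕ => c * (((j:ℝ) + m) ^ (-(s-1)))) atTop (𝓝 (c * 0)) :=
      h2.const_mul c
    have h4 : -(s-1) = 1 - s := by ring
    rw [h4, mul_zero] at h3
    exact h3
  have hGsum : HasSum (fun j => ψ j - ψ (j+1)) (ψ 0) := by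
    rw [hasSum_iff_tendsto_nat_of_nonneg hdiffnn]
    have h1 : ∀ N : ℕ, ∑ i ∈ Finset.range N, (ψ i - ψ (i+1)) = ψ 0 - ψ N :=
      fun N => Finset.sum_range_sub' ψ N
    simp_rw [h1]
    have h2 := htend.const_sub (ψ 0)
    rwa [sub_zero] at h2
  have hGshift : (fun j => G (j + m)) = fun j => ψ j - ψ (j+1) := by
    funext j
    have hjm : m ≤ j + m := Nat.le_add_left m j
    simp only [hGdef, hψ, if_pos hjm]
    push_cast
    ring
  have hG : HasSum G (ψ 0) := by
    have h0 := hGshift ▸ hGsum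
    have h1 := (hasSum_nat_add_iff m).1 h0
    have hz : ∑ i ∈ Finset.range m, G i = 0 := by
      apply Finset.sum_eq_zero
      intro i hi
      rw [Finset.mem_range] at hi
      have hni : ¬ m ≤ i := by omega
      simp only [hGdef, if_neg hni]
    rwa [hz, add_zero] at h1
  have hψ0 : ψ 0 = c * (m:ℝ)^(1-s) := by simp [hψ]
  have hFs : Summable F := Summable.of_nonneg_of_le hFnn hFG hG.summable
  refine ⟨hFs, ?_⟩
  calc ∑' n, F n ≤ ∑' n, G n := Summable.tsum_le_tsum hFG hFs hG.summable
  _ = ψ 0 := hG.tsum_eq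
  _ = c * (m:ℝ)^(1-s) := hψ0

private lemma int_tail {s : ℝ} (hs : 1 < s) (m : ℕ) (hm : 1 ≤ m) :
    Summable (fun n : ℤ => if (m:ℤ) ≤ |n| then |(n:ℝ)| ^ (-s) else 0) ∧
    ∑' n : ℤ, (if (m:ℤ) ≤ |n| then |(n:ℝ)| ^ (-s) else 0) ≤
      2 * (2 ^ s / (s - 1)) * (m:ℝ) ^ (1-s) := by
  obtain ⟨hFs, hFle⟩ := nat_tail hs m hm
  set F : ℕ → ℝ := fun n => if m ≤ n then (n:ℝ) ^ (-s) else 0 with hF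
  have hF' : Summable (fun n : ℕ => F (n+1)) := (summable_nat_add_iff 1).2 hFs
  have hHrec : (fun n : ℤ => if (m:ℤ) ≤ |n| then |(n:ℝ)| ^ (-s) else 0)
      = Int.rec F (fun n => F (n+1)) := by
    funext n
    cases n with
    | ofNat n =>
      show (if (m:ℤ) ≤ |(n:ℤ)| then |((n:ℤ):ℝ)| ^ (-s) else 0) = F n
      have h1 : |(n:ℤ)| = (n:ℤ) := abs_of_nonneg (Int.natCast_nonneg n)
      have h2 : |((n:ℤ):ℝ)| = (n:ℝ) := by
        push_cast
        exact abs_of_nonneg (Nat.cast_nonneg n)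
      rw [h1, h2]
      simp only [hF, Nat.cast_le, Int.ofNat_le]
    | negSucc n =>
      show (if (m:ℤ) ≤ |Int.negSucc n| then |((Int.negSucc n : ℤ):ℝ)| ^ (-s) else 0)
        = F (n+1)
      have h1 : |Int.negSucc n| = ((n+1 : ℕ) : ℤ) := by
        rw [Int.negSucc_eq]; push_cast; rw [abs_neg]
        exact abs_of_nonneg (by positivity)
      have h2 : |((Int.negSucc n : ℤ):ℝ)| = ((n+1 : ℕ) : ℝ) := by
        rw [Int.negSucc_eq]; push_cast; rw [abs_neg]
        exact abs_of_nonneg (by positivity)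
      rw [h1, h2]
      simp only [hF]
      norm_cast
  have hHs : Summable (fun n : ℤ => if (m:ℤ) ≤ |n| then |(n:ℝ)| ^ (-s) else 0) := by
    rw [hHrec]; exact hFs.int_rec hF'
  refine ⟨hHs, ?_⟩
  have htsum : ∑' n : ℤ, (if (m:ℤ) ≤ |n| then |(n:ℝ)| ^ (-s) else 0)
      = (∑' n : ℕ, F n) + ∑' n : ℕ, F (n+1) := by
    rw [hHrec]; exact tsum_int_rec hFs hF'
  have hF0 : F 0 = 0 := by simp only [hF, if_neg (by omega : ¬ m ≤ 0)]
  have hsucc : ∑' n : ℕ, F (n+1) = ∑' n : ℕ, F n := by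
    have := Summable.tsum_eq_zero_add hFs
    rw [hF0, zero_add] at this
    exact this.symm
  rw [htsum, hsucc]
  have : (∑' n : ℕ, F n) + (∑' n : ℕ, F n) ≤ 2 * (2 ^ s / (s - 1) * (m:ℝ) ^ (1-s)) := by
    linarith [hFle]
  linarith [this]

private lemma term_bound {a b : ℝ} {x y : ℝ} (hx : 1 ≤ x) (hy : 1 ≤ y)
    (hxy : x ≤ 2 * y) (hyx : y ≤ 2 * x) :
    1 / (x ^ a * y ^ b) ≤ 2 ^ |b| * x ^ (-(a+b)) := by
  have hx0 : (0:ℝ) < x := by linarith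
  have hy0 : (0:ℝ) < y := by linarith
  have hkey : 2 ^ (-|b|) * x ^ b ≤ y ^ b := by
    rcases le_or_gt 0 b with hb | hb
    · have h1 : x / 2 ≤ y := by linarith
      have h2 : (x/2) ^ b ≤ y ^ b := Real.rpow_le_rpow (by positivity) h1 hb
      have h3 : (x/2) ^ b = x ^ b / 2 ^ b :=
        Real.div_rpow (le_of_lt hx0) (by norm_num : (0:ℝ) ≤ 2) b
      rw [h3] at h2
      rw [abs_of_nonneg hb]
      calc 2 ^ (-b) * x ^ b = x ^ b / 2 ^ b := by
            rw [Real.rpow_neg (by norm_num : (0:ℝ) ≤ 2)]; ring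
      _ ≤ y ^ b := h2
    · have h2 : (2*x) ^ b ≤ y ^ b :=
        Real.rpow_le_rpow_of_nonpos hy0 hyx (le_of_lt hb)
      have h3 : (2*x) ^ b = 2 ^ b * x ^ b :=
        Real.mul_rpow (by norm_num) (le_of_lt hx0)
      rw [h3] at h2
      rw [abs_of_neg hb, neg_neg]
      exact h2
  have hprod : 2 ^ (-|b|) * x ^ (a+b) ≤ x ^ a * y ^ b := by
    have h4 := mul_le_mul_of_nonneg_left hkey (le_of_lt (Real.rpow_pos_of_pos hx0 a))
    calc 2 ^ (-|b|) * x ^ (a+b) = x ^ a * (2 ^ (-|b|) * x ^ b) := by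
          rw [Real.rpow_add hx0]; ring
    _ ≤ x ^ a * y ^ b := h4
  have hpos1 : (0:ℝ) < 2 ^ (-|b|) * x ^ (a+b) := by positivity
  calc 1 / (x ^ a * y ^ b) ≤ 1 / (2 ^ (-|b|) * x ^ (a+b)) :=
        one_div_le_one_div_of_le hpos1 hprod
  _ = 2 ^ |b| * x ^ (-(a+b)) := by
      rw [Real.rpow_neg (by norm_num : (0:ℝ) ≤ 2), Real.rpow_neg (le_of_lt hx0)]
      have hb2 : ((2:ℝ) ^ |b|) ≠ 0 := ne_of_gt (Real.rpow_pos_of_pos two_pos _)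
      have hxab : (x:ℝ) ^ (a+b) ≠ 0 := ne_of_gt (Real.rpow_pos_of_pos hx0 _)
      field_simp

/-- Convolution-type sum estimate over comparable frequencies:
for `a + b > 1`, the sum over nonzero integers `k₁ + k₂ = k` with
`|k₁|/2 ≤ |k₂| ≤ 2|k₁|` of `1/(|k₁|^a |k₂|^b)` is bounded by `C/|k|^(a+b-1)`. -/
theorem stmt_2 (a b : ℝ) (hab : 1 < a + b) :
    ∃ C : ℝ, 0 < C ∧ ∀ k : ℤ, k ≠ 0 →
      (∑' p : {p : ℤ × ℤ // p.1 ≠ 0 ∧ p.2 ≠ 0 ∧ p.1 + p.2 = k ∧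
          |p.1| ≤ 2 * |p.2| ∧ |p.2| ≤ 2 * |p.1|},
        1 / (|((p : ℤ × ℤ).1 : ℝ)| ^ a * |((p : ℤ × ℤ).2 : ℝ)| ^ b))
      ≤ C / |(k : ℝ)| ^ (a + b - 1) := by
  have hs : 1 < a + b := hab
  have hc1 : (0:ℝ) < 2 ^ |b| := Real.rpow_pos_of_pos two_pos _
  have hcpos : (0:ℝ) < 2 ^ (a+b) / (a+b - 1) :=
    div_pos (Real.rpow_pos_of_pos two_pos _) (by linarith)
  have h3pos : (0:ℝ) < 3 ^ (a+b-1) := Real.rpow_pos_of_pos (by norm_num) _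
  refine ⟨2 ^ |b| * (2 * (2 ^ (a+b) / (a+b - 1)) * 3 ^ (a+b-1)),
    by positivity, ?_⟩
  intro k hk
  have hk1 : (1:ℤ) ≤ |k| := Int.one_le_abs hk
  set mz : ℤ := (|k| + 2) / 3 with hmz
  have hmz1 : 1 ≤ mz := by omega
  have h3m : |k| ≤ 3 * mz := by omega
  set m : ℕ := mz.toNat with hmdef
  have hmcast : (m:ℤ) = mz := Int.toNat_of_nonneg (by omega)
  have hm1 : 1 ≤ m := by omega
  obtain ⟨hHs, hHle⟩ := int_tail hs m hm1
  set H : ℤ → ℝ := fun n => if (m:ℤ) ≤ |n| then |(n:ℝ)| ^ (-(a+b)) else 0 with hH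
  set g : ℤ → ℝ := fun n => 2 ^ |b| * H n with hg
  have hgs : Summable g := hHs.mul_left _
  set T := {p : ℤ × ℤ // p.1 ≠ 0 ∧ p.2 ≠ 0 ∧ p.1 + p.2 = k ∧
      |p.1| ≤ 2 * |p.2| ∧ |p.2| ≤ 2 * |p.1|} with hT
  set i : T → ℤ := fun p => p.1.1 with hi
  have hinj : Function.Injective i := by
    rintro ⟨⟨x1, x2⟩, hp⟩ ⟨⟨y1, y2⟩, hq⟩ h
    simp only [hi] at h
    apply Subtype.ext
    have h1 : x2 = k - x1 := by have := hp.2.2.1; omega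
    have h2 : y2 = k - y1 := by have := hq.2.2.1; omega
    simp only at h ⊢
    subst h
    rw [h1, h2]
  have hsupp : ∀ p : T, (m:ℤ) ≤ |p.1.1| := by
    rintro ⟨⟨x1, x2⟩, hx1, hx2, hsum, h4, h5⟩
    have h5' : |x2| ≤ 2 * |x1| := h5
    have h6 : |k| ≤ |x1| + |x2| := by rw [← hsum]; exact abs_add_le x1 x2
    show (m:ℤ) ≤ |x1|
    rw [hmcast, hmz]
    omega
  have hterm : ∀ p : T,
      1 / (|((p : ℤ × ℤ).1 : ℝ)| ^ a * |((p : ℤ × ℤ).2 : ℝ)| ^ b) ≤ g (i p) := by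
    rintro ⟨⟨x1, x2⟩, hx1, hx2, hsum, h4, h5⟩
    have hx1' : (1:ℤ) ≤ |x1| := Int.one_le_abs hx1
    have hx2' : (1:ℤ) ≤ |x2| := Int.one_le_abs hx2
    have e1 : |((x1:ℤ):ℝ)| = ((|x1| : ℤ) : ℝ) := Int.cast_abs.symm
    have e2 : |((x2:ℤ):ℝ)| = ((|x2| : ℤ) : ℝ) := Int.cast_abs.symm
    have hxr : (1:ℝ) ≤ |((x1:ℤ):ℝ)| := by rw [e1]; exact_mod_cast hx1'
    have hyr : (1:ℝ) ≤ |((x2:ℤ):ℝ)| := by rw [e2]; exact_mod_cast hx2'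
    have hxyr : |((x1:ℤ):ℝ)| ≤ 2 * |((x2:ℤ):ℝ)| := by
      rw [e1, e2]; exact_mod_cast h4
    have hyxr : |((x2:ℤ):ℝ)| ≤ 2 * |((x1:ℤ):ℝ)| := by
      rw [e1, e2]; exact_mod_cast h5
    have hb := term_bound (a := a) (b := b) hxr hyr hxyr hyxr
    have hcond : (m:ℤ) ≤ |x1| := hsupp ⟨⟨x1, x2⟩, hx1, hx2, hsum, h4, h5⟩
    have hgeq : g (i ⟨⟨x1, x2⟩, hx1, hx2, hsum, h4, h5⟩)
        = 2 ^ |b| * |((x1:ℤ):ℝ)| ^ (-(a+b)) := by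
      simp only [hg, hH, hi, if_pos hcond]
    rw [hgeq]
    exact hb
  have hfnn : ∀ p : T,
      0 ≤ 1 / (|((p : ℤ × ℤ).1 : ℝ)| ^ a * |((p : ℤ × ℤ).2 : ℝ)| ^ b) := by
    intro p; positivity
  have hgnn : ∀ c, c ∉ Set.range i → 0 ≤ g c := by
    intro c _
    simp only [hg, hH]
    split
    · positivity
    · simp
  have hfs : Summable (fun p : T =>
      1 / (|((p : ℤ × ℤ).1 : ℝ)| ^ a * |((p : ℤ × ℤ).2 : ℝ)| ^ b)) :=
    Summable.of_nonneg_of_le hfnn hterm (hgs.comp_injective hinj)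
  have hmain := Summable.tsum_le_tsum_of_inj i hinj hgnn hterm hfs hgs
  refine le_trans hmain ?_
  have hgsum : ∑' n : ℤ, g n = 2 ^ |b| * ∑' n : ℤ, H n := tsum_mul_left
  rw [hgsum]
  -- bounds on tail sum
  have hkr : (0:ℝ) < |(k:ℝ)| := abs_pos.mpr (Int.cast_ne_zero.mpr hk)
  have hmk : |(k:ℝ)| / 3 ≤ (m:ℝ) := by
    have h1 : (|k| : ℤ) ≤ 3 * (m:ℤ) := by rw [hmcast]; exact h3m
    have h2 : ((|k| : ℤ) : ℝ) ≤ 3 * ((m:ℤ) : ℝ) := by exact_mod_cast h1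
    rw [Int.cast_abs] at h2
    push_cast at h2 ⊢
    linarith
  have h7 : (m:ℝ) ^ (1-(a+b)) ≤ (|(k:ℝ)|/3) ^ (1-(a+b)) :=
    Real.rpow_le_rpow_of_nonpos (by positivity) hmk (by linarith)
  have h8 : (|(k:ℝ)|/3) ^ (1-(a+b)) = 3 ^ (a+b-1) * |(k:ℝ)| ^ (1-(a+b)) := by
    rw [Real.div_rpow (abs_nonneg _) (by norm_num : (0:ℝ) ≤ 3)]
    rw [show (1:ℝ)-(a+b) = -(a+b-1) by ring]
    rw [Real.rpow_neg (by norm_num : (0:ℝ) ≤ 3)]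
    rw [div_eq_mul_inv, inv_inv]
    ring
  have h9 : |(k:ℝ)| ^ (1-(a+b)) = (|(k:ℝ)| ^ (a+b-1))⁻¹ := by
    rw [show (1:ℝ)-(a+b) = -(a+b-1) by ring]
    exact Real.rpow_neg (abs_nonneg _) _
  have hHle2 : ∑' n : ℤ, H n ≤ 2 * (2 ^ (a+b) / (a+b - 1)) * (m:ℝ) ^ (1-(a+b)) := hHle
  calc 2 ^ |b| * ∑' n : ℤ, H n
      ≤ 2 ^ |b| * (2 * (2 ^ (a+b) / (a+b - 1)) * (m:ℝ) ^ (1-(a+b))) := by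
        apply mul_le_mul_of_nonneg_left hHle2 (le_of_lt hc1)
  _ ≤ 2 ^ |b| * (2 * (2 ^ (a+b) / (a+b - 1)) * (3 ^ (a+b-1) * |(k:ℝ)| ^ (1-(a+b)))) := by
        apply mul_le_mul_of_nonneg_left _ (le_of_lt hc1)
        apply mul_le_mul_of_nonneg_left _ (by positivity)
        rw [← h8]
        exact h7
  _ = 2 ^ |b| * (2 * (2 ^ (a+b) / (a+b - 1)) * 3 ^ (a+b-1)) / |(k:ℝ)| ^ (a + b - 1) := by
        rw [h9, div_eq_mul_inv]
        ring
end

section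
/- With z_t(k) the one-dimensional OU process with q_k² ≤ C₀|k|^{2γ}, for every h ∈ [0,1] there is a constant C such that E[|z_t(k) − z_s(k)|²] ≤ C · |t − s|^h · |k|^{−(2 − 2γ − 2h)} for all 0 ≤ s ≤ t and nonzero integers k. -/
/-!
Write `λ = k²` and `A = q_k² / (2k²)`. Expanding the square against the OU covariance
`A (e^{-λ|t-s|} - e^{-λ(t+s)})` gives
`E|z_t - z_s|² = 2A (1 - e^{-λ(t-s)}) - A (e^{-λt} - e^{-λs})² ≤ (q_k²/k²) (1 - e^{-k²(t-s)})`.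
Interpolating `1 - e^{-x} ≤ min(1, x) ≤ x^h` turns this into `q_k² (t-s)^h |k|^{2h-2}`,
and `q_k² ≤ C₀ |k|^{2γ}` finishes with `C = C₀`.
-/

open MeasureTheory Real

theorem integral_sub_sq_eq {Ω : Type*} [MeasurableSpace Ω] {P : Measure Ω} {f g : Ω → ℝ}
    (hf : MemLp f 2 P) (hg : MemLp g 2 P) :
    ∫ ω, (f ω - g ω) ^ 2 ∂P =
      ∫ ω, f ω * f ω ∂P + ∫ ω, g ω * g ω ∂P - 2 * ∫ ω, g ω * f ω ∂P := by
  have hff : Integrable (fun ω => f ω * f ω) P := hf.integrable_mul hf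
  have hgg : Integrable (fun ω => g ω * g ω) P := hg.integrable_mul hg
  have hgf : Integrable (fun ω => g ω * f ω) P := hg.integrable_mul hf
  have hexpand : (fun ω => (f ω - g ω) ^ 2) =
      fun ω => (f ω * f ω + g ω * g ω) - 2 * (g ω * f ω) := by
    funext ω; ring
  have hsum : Integrable (fun ω => f ω * f ω + g ω * g ω) P := hff.add hgg
  rw [hexpand, integral_sub hsum (hgf.const_mul 2), integral_add hff hgg, integral_const_mul]

theorem one_sub_exp_neg_le_rpow {x h : ℝ} (hx : 0 ≤ x) (h0 : 0 ≤ h) (h1 : h ≤ 1) :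
    1 - exp (-x) ≤ x ^ h := by
  rcases le_total x 1 with hx1 | hx1
  · calc 1 - exp (-x) ≤ x := by linarith [add_one_le_exp (-x)]
      _ ≤ x ^ h := by simpa using rpow_le_rpow_of_exponent_ge' hx hx1 h0 h1
  · calc 1 - exp (-x) ≤ 1 := by linarith [exp_pos (-x)]
      _ ≤ x ^ h := one_le_rpow hx1 h0

theorem integral_sq_sub_le_of_ou_covariance {Ω : Type*} [MeasurableSpace Ω] {P : Measure Ω}
    {X : ℝ → Ω → ℝ} {A l : ℝ} (hA : 0 ≤ A) (hmem : ∀ t, MemLp (X t) 2 P)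
    (hcov : ∀ s t : ℝ, 0 ≤ s → 0 ≤ t →
      ∫ ω, X s ω * X t ω ∂P = A * (exp (-l * |t - s|) - exp (-l * (t + s))))
    {s t : ℝ} (hs : 0 ≤ s) (hst : s ≤ t) :
    ∫ ω, (X t ω - X s ω) ^ 2 ∂P ≤ 2 * A * (1 - exp (-l * (t - s))) := by
  have ht : 0 ≤ t := hs.trans hst
  have htt : exp (-l * (t + t)) = exp (-l * t) ^ 2 := by rw [sq, ← exp_add]; ring_nf
  have hss : exp (-l * (s + s)) = exp (-l * s) ^ 2 := by rw [sq, ← exp_add]; ring_nf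
  have hts : exp (-l * (t + s)) = exp (-l * t) * exp (-l * s) := by rw [← exp_add]; ring_nf
  rw [integral_sub_sq_eq (hmem t) (hmem s), hcov t t ht ht, hcov s s hs hs, hcov s t hs ht,
    sub_self, sub_self, abs_zero, mul_zero, exp_zero, abs_of_nonneg (sub_nonneg.2 hst),
    htt, hss, hts]
  nlinarith [mul_nonneg hA (sq_nonneg (exp (-l * t) - exp (-l * s)))]

theorem rpow_sq_mul_div_sq {k x : ℝ} (hk : k ≠ 0) (hx : 0 ≤ x) (h : ℝ) :
    (k ^ 2 * x) ^ h / k ^ 2 = x ^ h * |k| ^ (2 * h - 2) := by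
  have hk' : 0 < |k| := abs_pos.2 hk
  rw [← sq_abs, mul_rpow (by positivity) hx, rpow_sub hk', rpow_mul hk'.le]
  norm_cast
  ring

theorem stmt_9_general {Ω : Type*} [MeasurableSpace Ω] (P : Measure Ω)
    (γ C₀ : ℝ) (hC₀ : 0 < C₀) (z : ℤ → ℝ → Ω → ℝ) (q : ℤ → ℝ)
    (hq : ∀ k : ℤ, k ≠ 0 → (q k) ^ 2 ≤ C₀ * |(k : ℝ)| ^ (2 * γ))
    (hmem : ∀ k t, MemLp (z k t) 2 P)
    (hcov : ∀ k : ℤ, k ≠ 0 → ∀ s t : ℝ, 0 ≤ s → 0 ≤ t →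
      ∫ ω, z k s ω * z k t ω ∂P = ((q k) ^ 2 / (2 * (k : ℝ) ^ 2)) *
        (Real.exp (-(k : ℝ) ^ 2 * |t - s|) - Real.exp (-(k : ℝ) ^ 2 * (t + s)))) :
    ∀ h : ℝ, 0 ≤ h → h ≤ 1 →
      ∃ C : ℝ, 0 < C ∧ ∀ k : ℤ, k ≠ 0 → ∀ s t : ℝ, 0 ≤ s → s ≤ t →
        ∫ ω, (z k t ω - z k s ω) ^ 2 ∂P ≤
          C * (t - s) ^ h * |(k : ℝ)| ^ (-(2 - 2 * γ - 2 * h)) := by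
  intro h h0 h1
  refine ⟨C₀, hC₀, fun k hk s t hs hst => ?_⟩
  have hk' : (k : ℝ) ≠ 0 := Int.cast_ne_zero.2 hk
  have hts : 0 ≤ t - s := sub_nonneg.2 hst
  calc ∫ ω, (z k t ω - z k s ω) ^ 2 ∂P
      ≤ 2 * ((q k) ^ 2 / (2 * (k : ℝ) ^ 2)) * (1 - exp (-(k : ℝ) ^ 2 * (t - s))) :=
        integral_sq_sub_le_of_ou_covariance (by positivity) (hmem k) (hcov k hk) hs hst
    _ = (q k) ^ 2 * ((1 - exp (-((k : ℝ) ^ 2 * (t - s)))) / (k : ℝ) ^ 2) := by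
        field_simp
    _ ≤ (q k) ^ 2 * (((k : ℝ) ^ 2 * (t - s)) ^ h / (k : ℝ) ^ 2) := by
        gcongr
        exact one_sub_exp_neg_le_rpow (by positivity) h0 h1
    _ = (q k) ^ 2 * (t - s) ^ h * |(k : ℝ)| ^ (2 * h - 2) := by
        rw [rpow_sq_mul_div_sq hk' hts, mul_assoc]
    _ ≤ C₀ * |(k : ℝ)| ^ (2 * γ) * (t - s) ^ h * |(k : ℝ)| ^ (2 * h - 2) := by
        gcongr
        exact hq k hk
    _ = C₀ * (t - s) ^ h * |(k : ℝ)| ^ (-(2 - 2 * γ - 2 * h)) := by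
        rw [mul_right_comm C₀, mul_assoc, ← rpow_add (abs_pos.2 hk')]
        ring_nf

/-- Temporal regularity of the OU process: if `q_k² ≤ C₀|k|^{2γ}` and the
covariance satisfies the OU formula, then for every `h ∈ [0,1]` there is `C`
with `E[(z_t(k) - z_s(k))²] ≤ C (t-s)^h |k|^{-(2-2γ-2h)}` for `0 ≤ s ≤ t`. -/
theorem stmt_9 {Ω : Type*} [MeasurableSpace Ω] (P : Measure Ω) [IsProbabilityMeasure P]
    (γ C₀ : ℝ) (hC₀ : 0 < C₀) (z : ℤ → ℝ → Ω → ℝ) (q : ℤ → ℝ)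
    (hq : ∀ k : ℤ, k ≠ 0 → (q k) ^ 2 ≤ C₀ * |(k : ℝ)| ^ (2 * γ))
    (hmem : ∀ k t, MemLp (z k t) 2 P)
    (hcov : ∀ k : ℤ, k ≠ 0 → ∀ s t : ℝ, 0 ≤ s → 0 ≤ t →
      ∫ ω, z k s ω * z k t ω ∂P = ((q k) ^ 2 / (2 * (k : ℝ) ^ 2)) *
        (Real.exp (-(k : ℝ) ^ 2 * |t - s|) - Real.exp (-(k : ℝ) ^ 2 * (t + s)))) :
    ∀ h : ℝ, 0 ≤ h → h ≤ 1 →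
      ∃ C : ℝ, 0 < C ∧ ∀ k : ℤ, k ≠ 0 → ∀ s t : ℝ, 0 ≤ s → s ≤ t →
        ∫ ω, (z k t ω - z k s ω) ^ 2 ∂P ≤
          C * (t - s) ^ h * |(k : ℝ)| ^ (-(2 - 2 * γ - 2 * h)) :=
  stmt_9_general P γ C₀ hC₀ z q hq hmem hcov
end

section
/- Let (Ω, ℱ, ℙ) be a probability space, X a random variable with values in a Polish space, and 𝒢, ℋ independent sub-σ-algebras such that X is measurable with respect to σ(𝒢, ℋ). Suppose that for ℙ-a.e. ω, the conditional law Law(X | 𝒢)(ω) is equivalent to a fixed probability measure m whenever conditioned on 𝒢. Then for any sub-σ-algebra 𝒢' ⊆ 𝒢 such that the 𝒢-conditional law of X depends only on 𝒢'-measurable data, Law(X | 𝒢')(ω) is also equivalent to m for a.e. ω. -/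
/-!
By the tower property, for `𝒢' ≤ 𝒢` the kernel `Law(· | 𝒢')(ω)` is a.s. the mixture of the
kernels `Law(· | 𝒢)(ω')` over `ω' ∼ Law(· | 𝒢')(ω)`: the two agree a.s. on each measurable set,
hence on a countable generating π-system, hence as measures. A P-null set is also null for
`Law(· | 𝒢')(ω)` for a.e. `ω`, so almost every mixed component is equivalent to `m`, and a mixture
of measures equivalent to `m` is equivalent to `m`.
-/

open MeasureTheory ProbabilityTheory

theorem MeasurableSpace.countable_generatePiSystem {α : Type*} {S : Set (Set α)}
    (hS : S.Countable) : (generatePiSystem S).Countable := by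
  refine ((Set.countable_ofPred_finite_subset hS).image fun T => ⋂₀ T).mono fun t ht => ?_
  induction ht with
  | @base s hs => exact ⟨{s}, ⟨Set.finite_singleton s, by simpa⟩, Set.sInter_singleton s⟩
  | inter _ _ _ ih₁ ih₂ =>
    obtain ⟨T₁, ⟨hT₁, hT₁S⟩, rfl⟩ := ih₁
    obtain ⟨T₂, ⟨hT₂, hT₂S⟩, rfl⟩ := ih₂
    exact ⟨T₁ ∪ T₂, ⟨hT₁.union hT₂, Set.union_subset hT₁S hT₂S⟩, Set.sInter_union T₁ T₂⟩

theorem MeasureTheory.ae_eq_of_forall_measurableSet_ae_eq {α β : Type*} [MeasurableSpace α]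
    [MeasurableSpace β] [MeasurableSpace.CountablyGenerated β] {μ : Measure α}
    {κ η : α → Measure β} [∀ a, IsFiniteMeasure (κ a)]
    (h : ∀ s, MeasurableSet s → ∀ᵐ a ∂μ, κ a s = η a s) : ∀ᵐ a ∂μ, κ a = η a := by
  set C := generatePiSystem (MeasurableSpace.countableGeneratingSet β)
  have hC : (insert Set.univ C).Countable :=
    (MeasurableSpace.countable_generatePiSystem
      MeasurableSpace.countable_countableGeneratingSet).insert _
  have hC_meas : ∀ s ∈ insert Set.univ C, MeasurableSet s := by
    rintro s (rfl | hs)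
    · exact MeasurableSet.univ
    · exact generatePiSystem_measurableSet
        (fun _ => MeasurableSpace.measurableSet_countableGeneratingSet) s hs
  filter_upwards [(ae_ball_iff hC).2 fun s hs => h s (hC_meas s hs)] with a ha
  refine ext_of_generate_finite C ?_ (isPiSystem_generatePiSystem _)
    (fun s hs => ha s (Set.mem_insert_of_mem _ hs)) (ha _ (Set.mem_insert _ _))
  rw [generateFrom_generatePiSystem_eq, MeasurableSpace.generateFrom_countableGeneratingSet]

theorem MeasureTheory.Measure.comp_ac_and_ac_of_ae {α β : Type*} [MeasurableSpace α]
    [MeasurableSpace β] {μ : Measure α} [IsProbabilityMeasure μ] {κ : Kernel α β}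
    {ν : Measure β} (h : ∀ᵐ a ∂μ, κ a ≪ ν ∧ ν ≪ κ a) : κ ∘ₘ μ ≪ ν ∧ ν ≪ κ ∘ₘ μ := by
  have hν : Kernel.const α ν ∘ₘ μ = ν := by rw [Measure.const_comp, measure_univ, one_smul]
  rw [← hν]
  exact ⟨AbsolutelyContinuous.comp_left μ (h.mono fun _ h => h.1),
    AbsolutelyContinuous.comp_left μ (h.mono fun _ h => h.2)⟩

namespace ProbabilityTheory

variable {Ω : Type*} {m m' mΩ : MeasurableSpace Ω} [StandardBorelSpace Ω]
  {μ : Measure Ω} [IsFiniteMeasure μ]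

theorem ae_ae_condExpKernel_of_ae (hm : m ≤ mΩ) {p : Ω → Prop} (h : ∀ᵐ ω ∂μ, p ω) :
    ∀ᵐ ω ∂μ, ∀ᵐ ω' ∂condExpKernel μ m ω, p ω' := by
  rw [← condExpKernel_comp_trim (μ := μ) hm] at h
  exact ae_of_ae_trim hm (Measure.ae_ae_of_ae_comp h)

theorem condExpKernel_apply_ae_eq_comp_apply (hm' : m' ≤ m) (hm : m ≤ mΩ) {s : Set Ω}
    (hs : MeasurableSet s) :
    ∀ᵐ ω ∂μ, condExpKernel μ m' ω s =
      ((condExpKernel μ m).comap id (measurable_id'' hm) ∘ₖ condExpKernel μ m') ω s := by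
  have h_integral : ∀ ω, ∫ ω', (condExpKernel μ m ω').real s ∂condExpKernel μ m' ω =
      (((condExpKernel μ m).comap id (measurable_id'' hm) ∘ₖ condExpKernel μ m') ω s).toReal := by
    intro ω
    rw [Kernel.comp_apply' _ _ _ hs, ← integral_toReal]
    · rfl
    · exact ((measurable_condExpKernel hs).mono hm le_rfl).aemeasurable
    · exact Filter.Eventually.of_forall fun _ => measure_lt_top _ _
  have h_tower : (fun ω => (condExpKernel μ m' ω).real s) =ᵐ[μ]
      fun ω => ∫ ω', (condExpKernel μ m ω').real s ∂condExpKernel μ m' ω :=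
    calc (fun ω => (condExpKernel μ m' ω).real s)
        _ =ᵐ[μ] μ⟦s | m'⟧ := condExpKernel_ae_eq_condExp (hm'.trans hm) hs
        _ =ᵐ[μ] μ[μ⟦s | m⟧ | m'] := (condExp_condExp_of_le hm' hm).symm
        _ =ᵐ[μ] μ[fun ω => (condExpKernel μ m ω).real s | m'] :=
          condExp_congr_ae (condExpKernel_ae_eq_condExp hm hs).symm
        _ =ᵐ[μ] _ := condExp_ae_eq_integral_condExpKernel (hm'.trans hm)
          (integrable_toReal_condExpKernel hs)
  filter_upwards [h_tower] with ω hω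
  rwa [h_integral, measureReal_def,
    ENNReal.toReal_eq_toReal_iff' (measure_ne_top _ _) (measure_ne_top _ _)] at hω

theorem condExpKernel_ae_eq_comp_of_le (hm' : m' ≤ m) (hm : m ≤ mΩ) :
    ∀ᵐ ω ∂μ, condExpKernel μ m' ω =
      ((condExpKernel μ m).comap id (measurable_id'' hm) ∘ₖ condExpKernel μ m') ω := by
  have : ∀ ω, IsFiniteMeasure (condExpKernel μ m' ω) := fun _ => inferInstance
  exact ae_eq_of_forall_measurableSet_ae_eq fun _ hs =>
    condExpKernel_apply_ae_eq_comp_apply hm' hm hs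

end ProbabilityTheory

theorem stmt_18_general {Ω E : Type*} {m𝒢 m𝒢' mℋ : MeasurableSpace Ω}
    [mΩ : MeasurableSpace Ω] [StandardBorelSpace Ω]
    [MeasurableSpace E]
    (hm𝒢 : m𝒢 ≤ mΩ) (hmℋ : mℋ ≤ mΩ) (hm𝒢' : m𝒢' ≤ m𝒢)
    (P : Measure Ω) [IsProbabilityMeasure P]
    (X : Ω → E) (hX : Measurable[m𝒢 ⊔ mℋ] X)
    (m : Measure E) [IsProbabilityMeasure m]
    (hequiv : ∀ᵐ ω ∂P,
      Measure.map X (condExpKernel P m𝒢 ω) ≪ m ∧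
      m ≪ Measure.map X (condExpKernel P m𝒢 ω)) :
    ∀ᵐ ω ∂P,
      Measure.map X (condExpKernel P m𝒢' ω) ≪ m ∧
      m ≪ Measure.map X (condExpKernel P m𝒢' ω) := by
  have hX_meas : Measurable X := hX.mono (sup_le hm𝒢 hmℋ) le_rfl
  filter_upwards [condExpKernel_ae_eq_comp_of_le (μ := P) hm𝒢' hm𝒢,
    ae_ae_condExpKernel_of_ae (hm𝒢'.trans hm𝒢) hequiv] with ω h_tower h_equiv
  rw [h_tower, Kernel.comp_apply, Measure.map_comp _ _ hX_meas]
  exact Measure.comp_ac_and_ac_of_ae (by simpa [Kernel.map_apply _ hX_meas] using h_equiv)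

/-- Conditioning statement used in the Cameron–Martin lemma: let `𝒢, ℋ` be
independent sub-σ-algebras, `X` measurable with respect to `σ(𝒢, ℋ)`, and
suppose the conditional law `Law(X | 𝒢)` is a.s. equivalent to a fixed
probability measure `m`. If `𝒢' ⊆ 𝒢` is a sub-σ-algebra such that the
`𝒢`-conditional law of `X` depends only on `𝒢'`-measurable data (i.e. the
evaluations `ω ↦ Law(X | 𝒢)(ω)(s)` are `𝒢'`-measurable), then `Law(X | 𝒢')`
is also a.s. equivalent to `m`. -/
theorem stmt_18 {Ω E : Type*} {m𝒢 m𝒢' mℋ : MeasurableSpace Ω}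
    [mΩ : MeasurableSpace Ω] [StandardBorelSpace Ω] [Nonempty Ω]
    [MeasurableSpace E]
    (hm𝒢 : m𝒢 ≤ mΩ) (hmℋ : mℋ ≤ mΩ) (hm𝒢' : m𝒢' ≤ m𝒢)
    (P : Measure Ω) [IsProbabilityMeasure P]
    (hindep : Indep m𝒢 mℋ P)
    (X : Ω → E) (hX : Measurable[m𝒢 ⊔ mℋ] X)
    (m : Measure E) [IsProbabilityMeasure m]
    (hequiv : ∀ᵐ ω ∂P,
      Measure.map X (condExpKernel P m𝒢 ω) ≪ m ∧
      m ≪ Measure.map X (condExpKernel P m𝒢 ω))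
    (hdep : ∀ s : Set E, MeasurableSet s →
      Measurable[m𝒢'] (fun ω => Measure.map X (condExpKernel P m𝒢 ω) s)) :
    ∀ᵐ ω ∂P,
      Measure.map X (condExpKernel P m𝒢' ω) ≪ m ∧
      m ≪ Measure.map X (condExpKernel P m𝒢' ω) :=
  stmt_18_general (mΩ := mΩ) hm𝒢 hmℋ hm𝒢' P X hX m hequiv
end
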